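/- Let u, φ : ℝ² → ℝ be smooth with compact support and define G(w) = ∫_{ℝ²} w_{x₁} w_{x₂} w_{x₁x₂} dx. Then the real function t ↦ G(u + tφ) is differentiable at t = 0 and its derivative there equals ∫_{ℝ²} det(D²u) φ dx. -/

import Mathlib

open MeasureTheory

/-- Partial derivative in the `i`-th coordinate direction of `f : ℝ² → ℝ`. -/
noncomputable def pd (i : Fin 2) (f : EuclideanSpace ℝ (Fin 2) → ℝ) :
    EuclideanSpace ℝ (Fin 2) → ℝ :=
  fun x => fderiv ℝ f x (EuclideanSpace.single i 1)

/-- Hessian determinant of `f : ℝ² → ℝ`. -/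
noncomputable def hessDet (f : EuclideanSpace ℝ (Fin 2) → ℝ) :
    EuclideanSpace ℝ (Fin 2) → ℝ :=
  fun x => pd 0 (pd 0 f) x * pd 1 (pd 1 f) x - (pd 1 (pd 0 f) x) ^ 2

/-- The cubic functional `G(w) = ∫ w_{x₁} w_{x₂} w_{x₁x₂}`. -/
noncomputable def Gfun (w : EuclideanSpace ℝ (Fin 2) → ℝ) : ℝ :=
  ∫ x, pd 0 w x * pd 1 w x * pd 1 (pd 0 w) x

set_option maxHeartbeats 1000000 in

lemma pd_smooth {f : EuclideanSpace ℝ (Fin 2) → ℝ} (hf : ContDiff ℝ (⊤ : ℕ∞) f) (i : Fin 2) : ContDiff ℝ (⊤ : ℕ∞) (pd i f) :=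
  (hf.fderiv_right (by simp)).clm_apply contDiff_const

lemma pd_supp {f : EuclideanSpace ℝ (Fin 2) → ℝ} (hfc : HasCompactSupport f) (i : Fin 2) :
    HasCompactSupport (pd i f) :=
  (hfc.fderiv ℝ).comp_left (g := fun L : EuclideanSpace ℝ (Fin 2) →L[ℝ] ℝ => L (EuclideanSpace.single i 1)) rfl

lemma pd_add_smul {f g : EuclideanSpace ℝ (Fin 2) → ℝ} (hf : ContDiff ℝ (⊤ : ℕ∞) f) (hg : ContDiff ℝ (⊤ : ℕ∞) g) (t : ℝ)
    (i : Fin 2) :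
    pd i (fun x => f x + t * g x) = fun x => pd i f x + t * pd i g x := by
  funext x
  have h : HasFDerivAt (fun x => f x + t * g x)
      (fderiv ℝ f x + t • fderiv ℝ g x) x :=
    ((hf.differentiable (by simp) x).hasFDerivAt).add
      (((hg.differentiable (by simp) x).hasFDerivAt).const_smul t)
  simp [pd, h.fderiv]

lemma pd_mul {f g : EuclideanSpace ℝ (Fin 2) → ℝ} (hf : ContDiff ℝ (⊤ : ℕ∞) f) (hg : ContDiff ℝ (⊤ : ℕ∞) g) (i : Fin 2) :
    pd i (fun x => f x * g x) = fun x => pd i f x * g x + f x * pd i g x := by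
  funext x
  rw [pd, fderiv_fun_mul (hf.differentiable (by simp) x) (hg.differentiable (by simp) x)]
  simp [pd]
  ring

lemma pd_comm {f : EuclideanSpace ℝ (Fin 2) → ℝ} (hf : ContDiff ℝ (⊤ : ℕ∞) f) (i j : Fin 2) :
    pd i (pd j f) = pd j (pd i f) := by
  funext x
  have h1 : ∀ y, HasFDerivAt f (fderiv ℝ f y) y :=
    fun y => (hf.differentiable (by simp) y).hasFDerivAt
  have h2 : HasFDerivAt (fderiv ℝ f) (fderiv ℝ (fderiv ℝ f) x) x :=
    ((hf.fderiv_right (m := (⊤ : ℕ∞)) (by simp)).differentiable (by simp) x).hasFDerivAt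
  have key : ∀ v w : EuclideanSpace ℝ (Fin 2), fderiv ℝ (fun y => fderiv ℝ f y w) x v =
      fderiv ℝ (fderiv ℝ f) x v w := by
    intro v w
    rw [fderiv_clm_apply ((hf.fderiv_right (m := (⊤ : ℕ∞)) (by simp)).differentiable (by simp) x)
      (differentiableAt_const w)]
    simp
  have e1 : pd i (pd j f) x =
      fderiv ℝ (fderiv ℝ f) x (EuclideanSpace.single i 1) (EuclideanSpace.single j 1) := key _ _
  have e2 : pd j (pd i f) x =
      fderiv ℝ (fderiv ℝ f) x (EuclideanSpace.single j 1) (EuclideanSpace.single i 1) := key _ _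
  rw [e1, e2]
  exact second_derivative_symmetric h1 h2 _ _

lemma intCS {f : EuclideanSpace ℝ (Fin 2) → ℝ} (hf : Continuous f) (hfc : HasCompactSupport f) :
    Integrable f := hf.integrable_of_hasCompactSupport hfc

lemma ibp {f g : EuclideanSpace ℝ (Fin 2) → ℝ} (hf : ContDiff ℝ (⊤ : ℕ∞) f) (hfc : HasCompactSupport f)
    (hg : ContDiff ℝ (⊤ : ℕ∞) g) (hgc : HasCompactSupport g) (i : Fin 2) :
    ∫ x, f x * pd i g x = - ∫ x, pd i f x * g x := by
  exact integral_mul_fderiv_eq_neg_fderiv_mul_of_integrable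
    (intCS ((pd_smooth hf i).continuous.mul (hg.continuous)) ((pd_supp hfc i).mul_right))
    (intCS (hf.continuous.mul (pd_smooth hg i).continuous) (hfc.mul_right))
    (intCS (hf.continuous.mul hg.continuous) (hfc.mul_right))
    (fun x _ => hf.differentiable (by simp) x) (fun x _ => hg.differentiable (by simp) x)

lemma first_var (u φ : EuclideanSpace ℝ (Fin 2) → ℝ)
    (hu : ContDiff ℝ (⊤ : ℕ∞) u) (huc : HasCompactSupport u)
    (hφ : ContDiff ℝ (⊤ : ℕ∞) φ) (hφc : HasCompactSupport φ) :
    (∫ x, (pd 0 φ x * pd 1 u x * pd 1 (pd 0 u) x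
        + pd 0 u x * pd 1 φ x * pd 1 (pd 0 u) x
        + pd 0 u x * pd 1 u x * pd 1 (pd 0 φ) x))
      = ∫ x, hessDet u x * φ x := by
  -- abbreviations
  have ha : ContDiff ℝ (⊤ : ℕ∞) (pd 0 u) := pd_smooth hu 0
  have hc : ContDiff ℝ (⊤ : ℕ∞) (pd 1 u) := pd_smooth hu 1
  have he : ContDiff ℝ (⊤ : ℕ∞) (pd 1 (pd 0 u)) := pd_smooth ha 1
  have hq : ContDiff ℝ (⊤ : ℕ∞) (pd 1 (pd 1 u)) := pd_smooth hc 1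
  have hp : ContDiff ℝ (⊤ : ℕ∞) (pd 0 (pd 0 u)) := pd_smooth ha 0
  have he1 : ContDiff ℝ (⊤ : ℕ∞) (pd 1 (pd 1 (pd 0 u))) := pd_smooth he 1
  have hq0 : ContDiff ℝ (⊤ : ℕ∞) (pd 0 (pd 1 (pd 1 u))) := pd_smooth hq 0
  have sa : HasCompactSupport (pd 0 u) := pd_supp huc 0
  have sc : HasCompactSupport (pd 1 u) := pd_supp huc 1
  have se : HasCompactSupport (pd 1 (pd 0 u)) := pd_supp sa 1
  have sq : HasCompactSupport (pd 1 (pd 1 u)) := pd_supp sc 1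
  have sp : HasCompactSupport (pd 0 (pd 0 u)) := pd_supp sa 0
  have se1 : HasCompactSupport (pd 1 (pd 1 (pd 0 u))) := pd_supp se 1
  have sq0 : HasCompactSupport (pd 0 (pd 1 (pd 1 u))) := pd_supp sq 0
  have hb : ContDiff ℝ (⊤ : ℕ∞) (pd 0 φ) := pd_smooth hφ 0
  have sb : HasCompactSupport (pd 0 φ) := pd_supp hφc 0
  -- Schwarz
  have schw : pd 0 (pd 1 (pd 1 u)) = pd 1 (pd 1 (pd 0 u)) := by
    rw [pd_comm hc 0 1, pd_comm hu 0 1]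
  -- IBP on the third term (direction 1, g = pd 0 φ)
  have T3 : ∫ x, (pd 0 u x * pd 1 u x) * pd 1 (pd 0 φ) x
      = - ∫ x, (pd 1 (pd 0 u) x * pd 1 u x + pd 0 u x * pd 1 (pd 1 u) x) * pd 0 φ x := by
    rw [ibp (ha.mul hc) (sa.mul_right) hb sb 1, pd_mul ha hc 1]
  -- IBP on the second term (direction 1, g = φ)
  have T2 : ∫ x, (pd 0 u x * pd 1 (pd 0 u) x) * pd 1 φ x
      = - ∫ x, (pd 1 (pd 0 u) x * pd 1 (pd 0 u) x + pd 0 u x * pd 1 (pd 1 (pd 0 u)) x) * φ x := by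
    rw [ibp (ha.mul he) (sa.mul_right) hφ hφc 1, pd_mul ha he 1]
  -- IBP on the remaining term (direction 0, g = φ)
  have T4 : ∫ x, (pd 0 u x * pd 1 (pd 1 u) x) * pd 0 φ x
      = - ∫ x, (pd 0 (pd 0 u) x * pd 1 (pd 1 u) x + pd 0 u x * pd 0 (pd 1 (pd 1 u)) x) * φ x := by
    rw [ibp (ha.mul hq) (sa.mul_right) hφ hφc 0, pd_mul ha hq 0]
  -- integrability facts
  have cφ := hφ.continuous
  have i1 : Integrable (fun x => pd 0 φ x * pd 1 u x * pd 1 (pd 0 u) x) :=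
    intCS ((hb.continuous.mul hc.continuous).mul he.continuous)
      ((sb.mul_right).mul_right)
  have i2 : Integrable (fun x => pd 0 u x * pd 1 φ x * pd 1 (pd 0 u) x) :=
    intCS ((ha.continuous.mul (pd_smooth hφ 1).continuous).mul he.continuous)
      ((sa.mul_right).mul_right)
  have i3 : Integrable (fun x => pd 0 u x * pd 1 u x * pd 1 (pd 0 φ) x) :=
    intCS ((ha.continuous.mul hc.continuous).mul (pd_smooth (pd_smooth hφ 0) 1).continuous)
      ((sa.mul_right).mul_right)
  have i4 : Integrable (fun x =>
      (pd 1 (pd 0 u) x * pd 1 (pd 0 u) x + pd 0 u x * pd 1 (pd 1 (pd 0 u)) x) * φ x) :=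
    intCS (((he.continuous.mul he.continuous).add (ha.continuous.mul he1.continuous)).mul cφ)
      (((se.mul_right).add (sa.mul_right)).mul_right)
  have i5 : Integrable (fun x =>
      (pd 0 (pd 0 u) x * pd 1 (pd 1 u) x + pd 0 u x * pd 0 (pd 1 (pd 1 u)) x) * φ x) :=
    intCS (((hp.continuous.mul hq.continuous).add (ha.continuous.mul hq0.continuous)).mul cφ)
      (((sp.mul_right).add (sa.mul_right)).mul_right)
  -- split the left-hand side
  have hsplit : (∫ x, (pd 0 φ x * pd 1 u x * pd 1 (pd 0 u) x
        + pd 0 u x * pd 1 φ x * pd 1 (pd 0 u) x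
        + pd 0 u x * pd 1 u x * pd 1 (pd 0 φ) x))
      = ((∫ x, pd 0 φ x * pd 1 u x * pd 1 (pd 0 u) x)
          + ∫ x, pd 0 u x * pd 1 φ x * pd 1 (pd 0 u) x)
        + ∫ x, pd 0 u x * pd 1 u x * pd 1 (pd 0 φ) x := by
    rw [show (∫ x, (pd 0 φ x * pd 1 u x * pd 1 (pd 0 u) x
        + pd 0 u x * pd 1 φ x * pd 1 (pd 0 u) x
        + pd 0 u x * pd 1 u x * pd 1 (pd 0 φ) x))
      = ((∫ x, (pd 0 φ x * pd 1 u x * pd 1 (pd 0 u) x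
          + pd 0 u x * pd 1 φ x * pd 1 (pd 0 u) x))
        + ∫ x, pd 0 u x * pd 1 u x * pd 1 (pd 0 φ) x) from integral_add (i1.add i2) i3,
      show (∫ x, (pd 0 φ x * pd 1 u x * pd 1 (pd 0 u) x
          + pd 0 u x * pd 1 φ x * pd 1 (pd 0 u) x))
        = ((∫ x, pd 0 φ x * pd 1 u x * pd 1 (pd 0 u) x)
          + ∫ x, pd 0 u x * pd 1 φ x * pd 1 (pd 0 u) x) from integral_add i1 i2]
  rw [hsplit]
  -- rewrite term 3 via T3 and split
  have e3 : (fun x => pd 0 u x * pd 1 u x * pd 1 (pd 0 φ) x)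
      = fun x => (pd 0 u x * pd 1 u x) * pd 1 (pd 0 φ) x := rfl
  rw [e3, T3]
  have split3 : ∫ x, (pd 1 (pd 0 u) x * pd 1 u x + pd 0 u x * pd 1 (pd 1 u) x) * pd 0 φ x
      = (∫ x, pd 0 φ x * pd 1 u x * pd 1 (pd 0 u) x)
        + ∫ x, (pd 0 u x * pd 1 (pd 1 u) x) * pd 0 φ x := by
    rw [show ((∫ x, pd 0 φ x * pd 1 u x * pd 1 (pd 0 u) x)
        + ∫ x, (pd 0 u x * pd 1 (pd 1 u) x) * pd 0 φ x)
      = ∫ x, (pd 0 φ x * pd 1 u x * pd 1 (pd 0 u) x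
          + (pd 0 u x * pd 1 (pd 1 u) x) * pd 0 φ x) from
      (integral_add i1 (intCS ((ha.continuous.mul hq.continuous).mul hb.continuous)
        ((sa.mul_right).mul_right))).symm]
    congr 1; funext x; ring
  rw [split3]
  -- rewrite term 2 via T2
  have e2 : (fun x => pd 0 u x * pd 1 φ x * pd 1 (pd 0 u) x)
      = fun x => (pd 0 u x * pd 1 (pd 0 u) x) * pd 1 φ x := by funext x; ring
  rw [e2, T2, T4]
  -- combine
  rw [neg_add, ← sub_eq_add_neg]
  have comb : (∫ x, (pd 0 (pd 0 u) x * pd 1 (pd 1 u) x + pd 0 u x * pd 0 (pd 1 (pd 1 u)) x) * φ x)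
      - (∫ x, (pd 1 (pd 0 u) x * pd 1 (pd 0 u) x + pd 0 u x * pd 1 (pd 1 (pd 0 u)) x) * φ x)
      = ∫ x, hessDet u x * φ x := by
    rw [show ((∫ x, (pd 0 (pd 0 u) x * pd 1 (pd 1 u) x + pd 0 u x * pd 0 (pd 1 (pd 1 u)) x) * φ x)
        - ∫ x, (pd 1 (pd 0 u) x * pd 1 (pd 0 u) x + pd 0 u x * pd 1 (pd 1 (pd 0 u)) x) * φ x)
      = ∫ x, ((pd 0 (pd 0 u) x * pd 1 (pd 1 u) x + pd 0 u x * pd 0 (pd 1 (pd 1 u)) x) * φ x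
          - (pd 1 (pd 0 u) x * pd 1 (pd 0 u) x + pd 0 u x * pd 1 (pd 1 (pd 0 u)) x) * φ x) from
      (integral_sub i5 i4).symm]
    congr 1; funext x
    rw [hessDet, schw]
    ring
  linarith [comb]

theorem stmt3 (u φ : EuclideanSpace ℝ (Fin 2) → ℝ)
    (hu : ContDiff ℝ (⊤ : ℕ∞) u) (huc : HasCompactSupport u)
    (hφ : ContDiff ℝ (⊤ : ℕ∞) φ) (hφc : HasCompactSupport φ) :
    HasDerivAt (fun t : ℝ => Gfun (fun x => u x + t * φ x))
      (∫ x, hessDet u x * φ x) 0 := by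
  have ha : ContDiff ℝ (⊤ : ℕ∞) (pd 0 u) := pd_smooth hu 0
  have hc : ContDiff ℝ (⊤ : ℕ∞) (pd 1 u) := pd_smooth hu 1
  have he : ContDiff ℝ (⊤ : ℕ∞) (pd 1 (pd 0 u)) := pd_smooth ha 1
  have hb : ContDiff ℝ (⊤ : ℕ∞) (pd 0 φ) := pd_smooth hφ 0
  have hd : ContDiff ℝ (⊤ : ℕ∞) (pd 1 φ) := pd_smooth hφ 1
  have hf2 : ContDiff ℝ (⊤ : ℕ∞) (pd 1 (pd 0 φ)) := pd_smooth hb 1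
  have sa : HasCompactSupport (pd 0 u) := pd_supp huc 0
  have sc : HasCompactSupport (pd 1 u) := pd_supp huc 1
  have se : HasCompactSupport (pd 1 (pd 0 u)) := pd_supp sa 1
  have sb : HasCompactSupport (pd 0 φ) := pd_supp hφc 0
  have sd : HasCompactSupport (pd 1 φ) := pd_supp hφc 1
  have sf2 : HasCompactSupport (pd 1 (pd 0 φ)) := pd_supp sb 1
  -- the coefficient functions
  set T0 : EuclideanSpace ℝ (Fin 2) → ℝ := fun x => pd 0 u x * pd 1 u x * pd 1 (pd 0 u) x with hT0
  set S1 : EuclideanSpace ℝ (Fin 2) → ℝ := fun x => pd 0 φ x * pd 1 u x * pd 1 (pd 0 u) x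
      + pd 0 u x * pd 1 φ x * pd 1 (pd 0 u) x
      + pd 0 u x * pd 1 u x * pd 1 (pd 0 φ) x with hS1
  set S2 : EuclideanSpace ℝ (Fin 2) → ℝ := fun x => pd 0 φ x * pd 1 φ x * pd 1 (pd 0 u) x
      + pd 0 φ x * pd 1 u x * pd 1 (pd 0 φ) x
      + pd 0 u x * pd 1 φ x * pd 1 (pd 0 φ) x with hS2
  set S3 : EuclideanSpace ℝ (Fin 2) → ℝ := fun x => pd 0 φ x * pd 1 φ x * pd 1 (pd 0 φ) x with hS3
  have iT0 : Integrable T0 :=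
    intCS ((ha.continuous.mul hc.continuous).mul he.continuous) ((sa.mul_right).mul_right)
  have iS1 : Integrable S1 := by
    refine Integrable.add (Integrable.add ?_ ?_) ?_
    · exact intCS ((hb.continuous.mul hc.continuous).mul he.continuous) ((sb.mul_right).mul_right)
    · exact intCS ((ha.continuous.mul hd.continuous).mul he.continuous) ((sa.mul_right).mul_right)
    · exact intCS ((ha.continuous.mul hc.continuous).mul hf2.continuous) ((sa.mul_right).mul_right)
  have iS2 : Integrable S2 := by
    refine Integrable.add (Integrable.add ?_ ?_) ?_
    · exact intCS ((hb.continuous.mul hd.continuous).mul he.continuous) ((sb.mul_right).mul_right)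
    · exact intCS ((hb.continuous.mul hc.continuous).mul hf2.continuous) ((sb.mul_right).mul_right)
    · exact intCS ((ha.continuous.mul hd.continuous).mul hf2.continuous) ((sa.mul_right).mul_right)
  have iS3 : Integrable S3 :=
    intCS ((hb.continuous.mul hd.continuous).mul hf2.continuous) ((sb.mul_right).mul_right)
  -- G(u + tφ) is a cubic polynomial in t
  have key : ∀ t : ℝ, Gfun (fun x => u x + t * φ x)
      = (∫ x, T0 x) + ((∫ x, S1 x) * t + ((∫ x, S2 x) * t ^ 2 + (∫ x, S3 x) * t ^ 3)) := by
    intro t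
    rw [Gfun]
    have h0 := pd_add_smul hu hφ t 0
    have h1 := pd_add_smul hu hφ t 1
    have h2 : pd 1 (pd 0 fun x => u x + t * φ x)
        = fun x => pd 1 (pd 0 u) x + t * pd 1 (pd 0 φ) x := by
      rw [h0, pd_add_smul ha hb t 1]
    rw [h2, h0, h1]
    have expand : (fun x => (pd 0 u x + t * pd 0 φ x) * (pd 1 u x + t * pd 1 φ x)
          * (pd 1 (pd 0 u) x + t * pd 1 (pd 0 φ) x))
        = fun x => T0 x + (t * S1 x + (t ^ 2 * S2 x + t ^ 3 * S3 x)) := by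
      funext x
      simp only [hT0, hS1, hS2, hS3]
      ring
    calc ∫ x, (pd 0 u x + t * pd 0 φ x) * (pd 1 u x + t * pd 1 φ x)
          * (pd 1 (pd 0 u) x + t * pd 1 (pd 0 φ) x)
        = ∫ x, (T0 x + (t * S1 x + (t ^ 2 * S2 x + t ^ 3 * S3 x))) := by rw [expand]
      _ = (∫ x, T0 x) + ∫ x, (t * S1 x + (t ^ 2 * S2 x + t ^ 3 * S3 x)) :=
          integral_add iT0 (((iS1.const_mul t).add
            (((iS2.const_mul (t ^ 2))).add (iS3.const_mul (t ^ 3)))))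
      _ = (∫ x, T0 x) + ((∫ x, t * S1 x) + ∫ x, (t ^ 2 * S2 x + t ^ 3 * S3 x)) :=
          congrArg (fun r => (∫ x, T0 x) + r) (integral_add (iS1.const_mul t)
            (((iS2.const_mul (t ^ 2))).add (iS3.const_mul (t ^ 3))))
      _ = (∫ x, T0 x) + ((∫ x, t * S1 x) + ((∫ x, t ^ 2 * S2 x) + ∫ x, t ^ 3 * S3 x)) :=
          congrArg (fun r => (∫ x, T0 x) + ((∫ x, t * S1 x) + r))
            (integral_add (iS2.const_mul (t ^ 2)) (iS3.const_mul (t ^ 3)))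
      _ = (∫ x, T0 x) + ((∫ x, S1 x) * t + ((∫ x, S2 x) * t ^ 2 + (∫ x, S3 x) * t ^ 3)) := by
          rw [integral_const_mul, integral_const_mul, integral_const_mul]; ring
  have hfun : (fun t : ℝ => Gfun (fun x => u x + t * φ x))
      = fun t : ℝ => (∫ x, T0 x) + ((∫ x, S1 x) * t + ((∫ x, S2 x) * t ^ 2 + (∫ x, S3 x) * t ^ 3)) :=
    funext key
  rw [hfun]
  have hpoly : HasDerivAt (fun t : ℝ => (∫ x, T0 x)
      + ((∫ x, S1 x) * t + ((∫ x, S2 x) * t ^ 2 + (∫ x, S3 x) * t ^ 3)))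
      (0 + ((∫ x, S1 x) * 1 + ((∫ x, S2 x) * (2 * 0 ^ 1) + (∫ x, S3 x) * (3 * 0 ^ 2)))) 0 := by
    exact (hasDerivAt_const 0 _).add
      (((hasDerivAt_id 0).const_mul _).add
        (((hasDerivAt_pow 2 0).const_mul _).add ((hasDerivAt_pow 3 0).const_mul _)))
  have hfv := first_var u φ hu huc hφ hφc
  convert hpoly using 1
  rw [← hfv]
  simp only [hS1]
  norm_num
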